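/- arXiv:2203.15260 — 4 statements merged into one kernel-verified Lean document; each statement's English description precedes it below -/
import Mathlib

section
/- Let $\delta \in (0,1]$ and let $\y_1,\dots,\y_q \in \mathbb{R}^d$ be unit vectors with $q \le d$ such that for each $i$, the orthogonal projection of $\y_i$ onto the span of $\y_1,\dots,\y_{i-1}$ has norm at most $1-\delta$. Then there exist $\lfloor q/2 \rfloor$ orthonormal vectors $\vec{m}_1,\dots,\vec{m}_{\lfloor q/2\rfloor}$ such that for every $\vec{a} \in \mathbb{R}^d$, $\max_i |\vec{m}_i^\top \vec{a}| \le (d/\delta) \max_j |\y_j^\top \vec{a}|$. -/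
open EuclideanSpace Submodule InnerProductSpace

/-!
Let `G` be the Gram matrix of the `yᵢ`. Writing `yᵢ` in terms of its Gram–Schmidt vectors `gᵢ`
(a unitriangular change of basis) gives `det G = ∏ ‖gᵢ‖²`, and `‖gᵢ‖² = 1 - ‖proj yᵢ‖² ≥ δ`, so
`det G ≥ δ^q`. Every eigenvalue of `G` is at most `tr G = q`, so fewer than `q/2` eigenvalues
`≥ δ²/q` would force `det G < δ^q`. For an orthonormal eigenbasis `u` of `G` with eigenvalues `λ`,
the vectors `∑ⱼ uⱼ yⱼ` are orthogonal with squared norms `λ`, and by Cauchy–Schwarz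
`|⟪∑ⱼ uⱼ yⱼ, a⟫| = |⟪u, (⟪yⱼ, a⟫)ⱼ⟫| ≤ √q maxⱼ |⟪yⱼ, a⟫|`. Normalizing those with `λ ≥ δ²/q`
costs a factor at most `√q / δ`.
-/

namespace Matrix

variable {E ι κ : Type*} [NormedAddCommGroup E] [InnerProductSpace ℝ E]

theorem gram_sum_smul [Fintype κ] (c : Matrix ι κ ℝ) (v : κ → E) :
    gram ℝ (fun i => ∑ k, c i k • v k) = c * gram ℝ v * cᵀ := by
  ext i j
  simp only [gram_apply, sum_inner, inner_sum, real_inner_smul_left, real_inner_smul_right,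
    mul_apply, transpose_apply, Finset.sum_mul]
  exact Finset.sum_congr rfl fun _ _ => Finset.sum_congr rfl fun _ _ => by ring

theorem gram_eq_diagonal_of_pairwise_orthogonal [DecidableEq ι] {v : ι → E}
    (hv : Pairwise fun i j => ⟪v i, v j⟫_ℝ = 0) : gram ℝ v = diagonal fun i => ‖v i‖ ^ 2 := by
  ext i j
  rcases eq_or_ne i j with rfl | hij
  · simp
  · simp [hv hij, hij]

end Matrix

section GramSchmidt

variable {E ι : Type*} [NormedAddCommGroup E] [InnerProductSpace ℝ E]
  [LinearOrder ι] [LocallyFiniteOrderBot ι] [WellFoundedLT ι]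

theorem starProjection_span_image_Iio_eq_sub_gramSchmidt (f : ι → E) (i : ι)
    [(span ℝ (f '' Set.Iio i)).HasOrthogonalProjection] :
    (span ℝ (f '' Set.Iio i)).starProjection (f i) = f i - gramSchmidt ℝ f i := by
  refine eq_starProjection_of_mem_orthogonal' ?_ ?_ (sub_add_cancel _ _).symm
  · rw [← span_gramSchmidt_Iio, gramSchmidt_def ℝ f i, sub_sub_cancel]
    simp_rw [starProjection_singleton]
    exact sum_mem fun j hj =>
      smul_mem _ _ (subset_span (Set.mem_image_of_mem _ (Finset.mem_Iio.1 hj)))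
  · refine isOrtho_iff_le.1 (isOrtho_span.2 ?_) (mem_span_singleton_self _)
    rintro _ rfl _ ⟨j, hj, rfl⟩
    exact gramSchmidt_inv_triangular ℝ f hj

theorem norm_sq_gramSchmidt_add_norm_sq_starProjection (f : ι → E) (i : ι)
    [(span ℝ (f '' Set.Iio i)).HasOrthogonalProjection] :
    ‖gramSchmidt ℝ f i‖ ^ 2 + ‖(span ℝ (f '' Set.Iio i)).starProjection (f i)‖ ^ 2 =
      ‖f i‖ ^ 2 := by
  rw [norm_sq_eq_add_norm_sq_starProjection (f i) (span ℝ (f '' Set.Iio i)),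
    starProjection_orthogonal_val, starProjection_span_image_Iio_eq_sub_gramSchmidt,
    sub_sub_cancel, add_comm]

noncomputable def gramSchmidtCoeff (f : ι → E) : Matrix ι ι ℝ :=
  1 + Matrix.of fun j i =>
    if i < j then ⟪gramSchmidt ℝ f i, f j⟫_ℝ / ‖gramSchmidt ℝ f i‖ ^ 2 else 0

variable [Fintype ι]

theorem sum_gramSchmidtCoeff_smul (f : ι → E) (j : ι) :
    ∑ i, gramSchmidtCoeff f j i • gramSchmidt ℝ f i = f j := by
  simp only [gramSchmidtCoeff, Matrix.add_apply, Matrix.one_apply, Matrix.of_apply, add_smul,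
    Finset.sum_add_distrib, ite_smul, one_smul, zero_smul, Finset.sum_ite_eq, Finset.mem_univ,
    if_true, ← Finset.sum_filter]
  conv_rhs => rw [gramSchmidt_def'' ℝ f j]
  congr 1
  simp [Finset.filter_gt_eq_Iio]

theorem det_gramSchmidtCoeff (f : ι → E) : (gramSchmidtCoeff f).det = 1 := by
  rw [Matrix.det_of_isLowerTriangular]
  · simp [gramSchmidtCoeff]
  · intro i j (hij : i < j)
    simp [gramSchmidtCoeff, hij.ne, hij.not_gt]

theorem det_gram_eq_prod_norm_sq_gramSchmidt (f : ι → E) :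
    (Matrix.gram ℝ f).det = ∏ i, ‖gramSchmidt ℝ f i‖ ^ 2 := by
  conv_lhs => rw [← funext (sum_gramSchmidtCoeff_smul f)]
  rw [Matrix.gram_sum_smul,
    Matrix.gram_eq_diagonal_of_pairwise_orthogonal (gramSchmidt_pairwise_orthogonal ℝ f),
    Matrix.det_mul, Matrix.det_mul, Matrix.det_transpose, det_gramSchmidtCoeff,
    Matrix.det_diagonal, one_mul, mul_one]

end GramSchmidt

theorem card_le_two_mul_card_filter_le_of_pow_le_prod {ι : Type*} [Fintype ι] {lam : ι → ℝ}
    {a C : ℝ} (ha : 0 < a) (haC : a < C) (h0 : ∀ i, 0 ≤ lam i) (hC : ∀ i, lam i ≤ C)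
    (hprod : a ^ Fintype.card ι ≤ ∏ i, lam i) :
    Fintype.card ι ≤ 2 * Finset.card {i | a ^ 2 / C ≤ lam i} := by
  classical
  set S : Finset ι := {i | a ^ 2 / C ≤ lam i}
  set n := Fintype.card ι
  have hC0 : 0 < C := ha.trans haC
  have hSn : S.card + Sᶜ.card = n := by rw [Finset.card_add_card_compl]
  -- bound the factors by `C` on `S` and by `a² / C` off `S`; then `a / C < 1` does the counting
  have hscaled : C ^ n * (a / C) ^ n ≤ C ^ n * (a / C) ^ (2 * Sᶜ.card) :=
    calc C ^ n * (a / C) ^ n = a ^ n := by rw [← mul_pow, mul_div_cancel₀ _ hC0.ne']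
      _ ≤ (∏ i ∈ S, lam i) * ∏ i ∈ Sᶜ, lam i := by rwa [Finset.prod_mul_prod_compl]
      _ ≤ C ^ S.card * (a ^ 2 / C) ^ Sᶜ.card := by
        rw [← Finset.prod_const, ← Finset.prod_const]
        exact mul_le_mul (Finset.prod_le_prod (fun i _ => h0 i) fun i _ => hC i)
          (Finset.prod_le_prod (fun i _ => h0 i) fun i hi =>
            (not_le.1 (by simpa [S] using hi)).le)
          (Finset.prod_nonneg fun i _ => h0 i) (Finset.prod_nonneg fun _ _ => hC0.le)
      _ = C ^ n * (a / C) ^ (2 * Sᶜ.card) := by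
        rw [← hSn, pow_add, pow_mul, mul_assoc, ← mul_pow]
        congr 2
        field_simp
  have hcompl : 2 * Sᶜ.card ≤ n :=
    (pow_le_pow_iff_right_of_lt_one₀ (div_pos ha hC0) ((div_lt_one hC0).2 haC)).1
      (le_of_mul_le_mul_left hscaled (pow_pos hC0 n))
  omega

section GramEigenvector

open Matrix

variable {E ι : Type*} [NormedAddCommGroup E] [InnerProductSpace ℝ E] [Fintype ι] [DecidableEq ι]

noncomputable def gramEigenvector (y : ι → E) (β : ι) : E :=
  ∑ j, (isHermitian_gram ℝ y).eigenvectorBasis β j • y j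

theorem inner_gramEigenvector (y : ι → E) (β γ : ι) :
    ⟪gramEigenvector y β, gramEigenvector y γ⟫_ℝ =
      if β = γ then (isHermitian_gram ℝ y).eigenvalues γ else 0 := by
  set hA := isHermitian_gram ℝ y
  rw [gramEigenvector, gramEigenvector, ← star_dotProduct_gram_mulVec,
    hA.mulVec_eigenvectorBasis, dotProduct_smul, dotProduct_comm, ← inner_eq_star_dotProduct,
    orthonormal_iff_ite.1 hA.eigenvectorBasis.orthonormal]
  split_ifs <;> simp

theorem eigenvalues_gram_le_sum_norm_sq (y : ι → E) (β : ι) :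
    (isHermitian_gram ℝ y).eigenvalues β ≤ ∑ j, ‖y j‖ ^ 2 := by
  have htrace := (isHermitian_gram ℝ y).trace_eq_sum_eigenvalues
  simp only [trace, diag_apply, gram_apply, real_inner_self_eq_norm_sq,
    RCLike.ofReal_real_eq_id, id] at htrace
  rw [htrace]
  exact Finset.single_le_sum (fun i _ => (posSemidef_gram ℝ y).eigenvalues_nonneg i)
    (Finset.mem_univ β)

theorem abs_inner_gramEigenvector_le (y : ι → E) (β : ι) (a : E) :
    |⟪gramEigenvector y β, a⟫_ℝ| ≤ √(Fintype.card ι) * ⨆ j, |⟪y j, a⟫_ℝ| := by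
  set c : EuclideanSpace ℝ ι := WithLp.toLp 2 fun j => ⟪y j, a⟫_ℝ
  have hc : ⟪gramEigenvector y β, a⟫_ℝ = ⟪(isHermitian_gram ℝ y).eigenvectorBasis β, c⟫_ℝ := by
    simp [gramEigenvector, c, sum_inner, real_inner_smul_left, PiLp.inner_apply, mul_comm]
  calc |⟪gramEigenvector y β, a⟫_ℝ| ≤ ‖c‖ := by
        rw [hc]
        simpa using abs_real_inner_le_norm ((isHermitian_gram ℝ y).eigenvectorBasis β) c
    _ ≤ √(Fintype.card ι) * ⨆ j, |⟪y j, a⟫_ℝ| := by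
        simpa [c, -basisFun_apply, basisFun_inner] using
          (EuclideanSpace.basisFun ι ℝ).norm_le_card_mul_iSup_norm_inner c

theorem exists_orthonormal_abs_inner_le (y : ι → E) {t : ℝ} (ht : 0 < t) {k : ℕ}
    (hk : k ≤ Finset.card {β | t ≤ (isHermitian_gram ℝ y).eigenvalues β}) :
    ∃ m : Fin k → E, Orthonormal ℝ m ∧
      ∀ a i, |⟪m i, a⟫_ℝ| ≤ √(Fintype.card ι) / √t * ⨆ j, |⟪y j, a⟫_ℝ| := by
  set lam := (isHermitian_gram ℝ y).eigenvalues
  obtain ⟨σ⟩ : Nonempty (Fin k ↪ {β // t ≤ lam β}) :=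
    Function.Embedding.nonempty_of_card_le (by simpa [Fintype.card_subtype] using hk)
  have hσ : ∀ i, t ≤ lam (σ i) := fun i => (σ i).2
  have hσinj : ∀ i j, (σ i : ι) = σ j ↔ i = j := fun i j =>
    (Subtype.val_injective.comp σ.injective).eq_iff
  refine ⟨fun i => (√(lam (σ i)))⁻¹ • gramEigenvector y (σ i), ?_, fun a i => ?_⟩
  · rw [orthonormal_iff_ite]
    intro i j
    rw [real_inner_smul_left, real_inner_smul_right, inner_gramEigenvector]
    simp only [hσinj]
    split_ifs with hij
    · subst hij
      have hpos : 0 < lam (σ i) := ht.trans_le (hσ i)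
      change (√(lam (σ i)))⁻¹ * ((√(lam (σ i)))⁻¹ * lam (σ i)) = 1
      rw [← mul_assoc, ← mul_inv, Real.mul_self_sqrt hpos.le, inv_mul_cancel₀ hpos.ne']
    · simp
  · rw [real_inner_smul_left, abs_mul, abs_inv, abs_of_nonneg (Real.sqrt_nonneg _),
      div_eq_inv_mul, mul_assoc]
    gcongr
    · exact hσ i
    · exact abs_inner_gramEigenvector_le y _ a

end GramEigenvector

/-- Lemma `algebrahelper` (Lemma 17 of the paper): from `q ≤ d` robustly linearly
independent unit vectors one can extract `⌊q/2⌋` orthonormal vectors `m` such that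
`|⟪m i, a⟫| ≤ (d/δ) * sup_j |⟪y j, a⟫|` for all `a`. -/
theorem stmt_0 (d q : ℕ) (hq : q ≤ d) (δ : ℝ) (hδ0 : 0 < δ) (hδ1 : δ ≤ 1)
    (y : Fin q → EuclideanSpace ℝ (Fin d))
    (hnorm : ∀ i, ‖y i‖ = 1)
    (hproj : ∀ i : Fin q,
      ‖(orthogonalProjection (Submodule.span ℝ (y '' {j | (j : ℕ) < (i : ℕ)})) (y i) :
        EuclideanSpace ℝ (Fin d))‖ ≤ 1 - δ) :
    ∃ m : Fin (q / 2) → EuclideanSpace ℝ (Fin d),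
      Orthonormal ℝ m ∧
      ∀ a : EuclideanSpace ℝ (Fin d), ∀ i : Fin (q / 2),
        |(⟪m i, a⟫_ℝ)| ≤ ((d : ℝ) / δ) * ⨆ j : Fin q, |(⟪y j, a⟫_ℝ)| := by
  obtain hq2 | hq2 := lt_or_ge q 2
  · have : IsEmpty (Fin (q / 2)) := by rw [Nat.div_eq_of_lt hq2]; infer_instance
    exact ⟨isEmptyElim, .of_isEmpty _, fun _ => isEmptyElim⟩
  have hq0 : (0 : ℝ) < q := by positivity
  set lam := (Matrix.isHermitian_gram ℝ y).eigenvalues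
  have hgs : ∀ i, δ ≤ ‖gramSchmidt ℝ y i‖ ^ 2 := fun i => by
    have hp : ‖(span ℝ (y '' Set.Iio i)).starProjection (y i)‖ ≤ 1 - δ := hproj i
    have := norm_sq_gramSchmidt_add_norm_sq_starProjection y i
    rw [hnorm] at this
    nlinarith [norm_nonneg ((span ℝ (y '' Set.Iio i)).starProjection (y i))]
  have hdet : δ ^ Fintype.card (Fin q) ≤ ∏ β, lam β := by
    have := (Matrix.isHermitian_gram ℝ y).det_eq_prod_eigenvalues
    simp only [RCLike.ofReal_real_eq_id, id, det_gram_eq_prod_norm_sq_gramSchmidt] at this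
    rw [← this]
    simpa using Finset.prod_le_prod (s := Finset.univ) (fun _ _ => hδ0.le) fun i _ => hgs i
  have hlam : ∀ β, lam β ≤ q := by simpa [hnorm] using eigenvalues_gram_le_sum_norm_sq y
  have hcount := card_le_two_mul_card_filter_le_of_pow_le_prod hδ0
    (hδ1.trans_lt (by exact_mod_cast hq2)) (Matrix.posSemidef_gram ℝ y).eigenvalues_nonneg hlam
    hdet
  rw [Fintype.card_fin] at hcount
  obtain ⟨m, hm, hbound⟩ := exists_orthonormal_abs_inner_le y (t := δ ^ 2 / q) (by positivity)
    (k := q / 2) (by omega)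
  refine ⟨m, hm, fun a i => (hbound a i).trans ?_⟩
  have hM : 0 ≤ ⨆ j, |⟪y j, a⟫_ℝ| := Real.iSup_nonneg fun _ => abs_nonneg _
  rw [Real.sqrt_div' _ hq0.le, Real.sqrt_sq hδ0.le, Fintype.card_fin, div_div_eq_mul_div,
    Real.mul_self_sqrt hq0.le]
  gcongr
end

section
/- Let $\vec{h}$ be drawn uniformly from the hypercube $\{\pm 1\}^d$ and let $Z = (\vec{z}_1,\dots,\vec{z}_k) \in \mathbb{R}^{d\times k}$ have orthonormal columns. Then there exists an absolute constant $c > 0$ (independent of $d, k, Z$) such that for every $t \in (0, 1/\sqrt{2}]$, $\mathbb{P}(\|Z^\top \vec{h}\|_\infty \le t) \le 2^{-ck}$. -/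
/-
Write `S(h) = ‖Zᵀh‖² = ∑ᵢ ⟪zᵢ, h⟫²`; on the event in question `S ≤ k t² ≤ k/2`, whereas `𝔼 S = k`
and, by Khintchine's fourth-moment bound `𝔼 ⟪v, h⟫⁴ ≤ 3 ‖v‖⁴` and Cauchy–Schwarz, `𝔼 S² ≤ 3k²`.
Paley–Zygmund then gives `ℙ(S > θk) ≥ (1 - θ)²/3`, so the event has probability at most `11/12`.
For large `k` we use concentration: `h ↦ ‖Zᵀh‖` is convex and 1-Lipschitz, and
`|hₐ - h'ₐ| = 2·𝟙[hₐ ≠ h'ₐ]`, so it exceeds its maximum over a set `A` by at most `2 d_T(A, h)`,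
where `d_T` is Talagrand's convex distance. Talagrand's inequality
`∑ₓ exp (d_T(A, x)² / 4) ≤ 4ⁿ / |A|`, proved by induction on the dimension, prevents the sets
`{S ≤ k/2}` and `{S > 8k/9}` (at convex distance `≥ √(k/72)`) from both being large, which gives
`ℙ(S ≤ k/2) ≤ 243 e^{-k/288}`. The two bounds combine into `2^{-ck}` for a small absolute `c`.
-/

open Finset Real InnerProductSpace

namespace BoolCube

abbrev Cube (n : ℕ) := Fin n → Bool

variable {n : ℕ}

/-! ### Talagrand's convex distance inequality -/

def mismatch (x y : Cube n) (i : Fin n) : ℝ := if x i = y i then 0 else 1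

def IsWeighting (A : Finset (Cube n)) (w : Cube n → ℝ) : Prop :=
  w ∈ stdSimplex ℝ (Cube n) ∧ ∀ y ∉ A, w y = 0

def mismatchProfile (x : Cube n) (w : Cube n → ℝ) (i : Fin n) : ℝ :=
  ∑ y, w y * mismatch x y i

def profileEnergy (x : Cube n) (w : Cube n → ℝ) : ℝ := ∑ i, mismatchProfile x w i ^ 2

-- Talagrand's convex distance: `convexDistSq A x = d_T(A, x)²` is the squared Euclidean norm of
-- the closest point to `0` in the convex hull of the mismatch vectors `(𝟙[x i ≠ y i])ᵢ`, `y ∈ A`.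
noncomputable def convexDistSq (A : Finset (Cube n)) (x : Cube n) : ℝ :=
  sInf (profileEnergy x '' {w | IsWeighting A w})

lemma mismatch_nonneg (x y : Cube n) (i : Fin n) : 0 ≤ mismatch x y i := by
  unfold mismatch; split_ifs <;> norm_num

lemma mismatch_le_one (x y : Cube n) (i : Fin n) : mismatch x y i ≤ 1 := by
  unfold mismatch; split_ifs <;> norm_num

lemma profileEnergy_nonneg (x : Cube n) (w : Cube n → ℝ) : 0 ≤ profileEnergy x w :=
  sum_nonneg fun _ _ => sq_nonneg _

lemma isCompact_setOf_isWeighting (A : Finset (Cube n)) :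
    IsCompact {w : Cube n → ℝ | IsWeighting A w} := by
  have hsupp : IsClosed {w : Cube n → ℝ | ∀ y ∉ A, w y = 0} := by
    simp only [Set.ofPred_forall]
    exact isClosed_iInter fun y => isClosed_iInter fun _ =>
      isClosed_eq (continuous_apply y) continuous_const
  exact (isCompact_stdSimplex ℝ (Cube n)).inter_right hsupp

lemma continuous_profileEnergy (x : Cube n) : Continuous (profileEnergy x) := by
  unfold profileEnergy mismatchProfile
  fun_prop

lemma convexDistSq_le {A : Finset (Cube n)} {w : Cube n → ℝ} (hw : IsWeighting A w)
    (x : Cube n) : convexDistSq A x ≤ profileEnergy x w :=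
  csInf_le ⟨0, by rintro _ ⟨w, _, rfl⟩; exact profileEnergy_nonneg x w⟩ ⟨w, hw, rfl⟩

lemma convexDistSq_nonneg (A : Finset (Cube n)) (x : Cube n) : 0 ≤ convexDistSq A x :=
  Real.sInf_nonneg <| by rintro _ ⟨w, _, rfl⟩; exact profileEnergy_nonneg x w

lemma exists_isWeighting_profileEnergy_eq {A : Finset (Cube n)} (hA : A.Nonempty) (x : Cube n) :
    ∃ w, IsWeighting A w ∧ profileEnergy x w = convexDistSq A x := by
  obtain ⟨y, hy⟩ := hA
  have hne : {w : Cube n → ℝ | IsWeighting A w}.Nonempty := by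
    refine ⟨Pi.single y 1, ⟨fun y' => ?_, by simp⟩, fun y' hy' => ?_⟩
    · by_cases h : y' = y <;> simp [h]
    · simp [show y' ≠ y by rintro rfl; exact hy' hy]
  exact ((isCompact_setOf_isWeighting A).image (continuous_profileEnergy x)).sInf_mem
    (hne.image _)

lemma mismatchProfile_add (x : Cube n) (w₁ w₂ : Cube n → ℝ) :
    mismatchProfile x (w₁ + w₂) = mismatchProfile x w₁ + mismatchProfile x w₂ := by
  ext i; simp only [mismatchProfile, Pi.add_apply, add_mul, sum_add_distrib]

lemma mismatchProfile_smul (x : Cube n) (c : ℝ) (w : Cube n → ℝ) :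
    mismatchProfile x (c • w) = c • mismatchProfile x w := by
  ext i; simp only [mismatchProfile, Pi.smul_apply, smul_eq_mul, mul_sum, mul_assoc]

lemma mismatchProfile_mem_Icc {w : Cube n → ℝ} (hw : w ∈ stdSimplex ℝ (Cube n)) (x : Cube n)
    (i : Fin n) : mismatchProfile x w i ∈ Set.Icc 0 1 := by
  refine ⟨sum_nonneg fun y _ => mul_nonneg (hw.1 y) (mismatch_nonneg x y i), ?_⟩
  calc mismatchProfile x w i ≤ ∑ y, w y :=
        sum_le_sum fun y _ => mul_le_of_le_one_right (hw.1 y) (mismatch_le_one x y i)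
    _ = 1 := hw.2

lemma IsWeighting.convex_comb {A : Finset (Cube n)} {w₁ w₂ : Cube n → ℝ}
    (h₁ : IsWeighting A w₁) (h₂ : IsWeighting A w₂) {l : ℝ} (hl₀ : 0 ≤ l) (hl₁ : l ≤ 1) :
    IsWeighting A (l • w₁ + (1 - l) • w₂) :=
  ⟨convex_stdSimplex ℝ (Cube n) h₁.1 h₂.1 hl₀ (sub_nonneg.2 hl₁) (by ring),
    fun y hy => by simp [h₁.2 y hy, h₂.2 y hy]⟩

lemma profileEnergy_convex_comb_le (x : Cube n) (w₁ w₂ : Cube n → ℝ) {l : ℝ}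
    (hl₀ : 0 ≤ l) (hl₁ : l ≤ 1) :
    profileEnergy x (l • w₁ + (1 - l) • w₂)
      ≤ l * profileEnergy x w₁ + (1 - l) * profileEnergy x w₂ := by
  simp only [profileEnergy, mismatchProfile_add, mismatchProfile_smul, Pi.add_apply,
    Pi.smul_apply, smul_eq_mul, mul_sum, ← sum_add_distrib]
  refine sum_le_sum fun i _ => ?_
  nlinarith [mul_nonneg (mul_nonneg hl₀ (sub_nonneg.2 hl₁))
    (sq_nonneg (mismatchProfile x w₁ i - mismatchProfile x w₂ i))]

lemma sum_cube_succ {M : Type*} [AddCommMonoid M] (F : Cube (n + 1) → M) :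
    ∑ x, F x = ∑ b, ∑ z : Cube n, F (Fin.cons b z) := by
  rw [← (Fin.consEquiv fun _ => Bool).sum_comp F]
  exact Fintype.sum_prod_type _

def fiber (A : Finset (Cube (n + 1))) (b : Bool) : Finset (Cube n) :=
  univ.filter fun z => Fin.cons b z ∈ A

def projection (A : Finset (Cube (n + 1))) : Finset (Cube n) := fiber A false ∪ fiber A true

lemma mem_fiber {A : Finset (Cube (n + 1))} {b : Bool} {z : Cube n} :
    z ∈ fiber A b ↔ Fin.cons b z ∈ A := by simp [fiber]

lemma fiber_subset_projection (A : Finset (Cube (n + 1))) (b : Bool) :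
    fiber A b ⊆ projection A := by
  cases b
  exacts [subset_union_left, subset_union_right]

lemma projection_nonempty {A : Finset (Cube (n + 1))} (hA : A.Nonempty) :
    (projection A).Nonempty := by
  obtain ⟨x, hx⟩ := hA
  refine ⟨Fin.tail x, fiber_subset_projection A (x 0) (mem_fiber.2 ?_)⟩
  rwa [Fin.cons_self_tail]

lemma card_eq_card_fiber_add_card_fiber (A : Finset (Cube (n + 1))) :
    #A = #(fiber A false) + #(fiber A true) := by
  have hfiber : ∀ b, #(fiber A b) = ∑ z : Cube n, if Fin.cons b z ∈ A then 1 else 0 :=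
    fun b => card_filter _ _
  calc #A = ∑ x : Cube (n + 1), if x ∈ A then 1 else 0 := by simp
    _ = ∑ b, ∑ z : Cube n, if Fin.cons b z ∈ A then 1 else 0 := sum_cube_succ _
    _ = #(fiber A false) + #(fiber A true) := by rw [Fintype.sum_bool, hfiber, hfiber, add_comm]

def marginal (W : Cube (n + 1) → ℝ) (z : Cube n) : ℝ := ∑ b, W (Fin.cons b z)

def liftAlong (β : Cube n → Bool) (w : Cube n → ℝ) (x : Cube (n + 1)) : ℝ :=
  if x 0 = β (Fin.tail x) then w (Fin.tail x) else 0

lemma marginal_liftAlong (β : Cube n → Bool) (w : Cube n → ℝ) :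
    marginal (liftAlong β w) = w := by
  ext z; simp [marginal, liftAlong]

lemma isWeighting_liftAlong {A : Finset (Cube (n + 1))} {β : Cube n → Bool} {w : Cube n → ℝ}
    (hw : w ∈ stdSimplex ℝ (Cube n)) (hA : ∀ z, w z ≠ 0 → Fin.cons (β z) z ∈ A) :
    IsWeighting A (liftAlong β w) := by
  refine ⟨⟨fun x => ?_, ?_⟩, fun x hx => ?_⟩
  · unfold liftAlong; split_ifs
    exacts [hw.1 _, le_rfl]
  · calc ∑ x, liftAlong β w x = ∑ z, marginal (liftAlong β w) z := by
          rw [sum_cube_succ, sum_comm]; rfl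
      _ = 1 := by rw [marginal_liftAlong, hw.2]
  · unfold liftAlong; split_ifs with h
    · by_contra hne
      exact hx (by simpa [← h] using hA _ hne)
    · rfl

lemma mismatchProfile_cons_succ (b : Bool) (z : Cube n) (W : Cube (n + 1) → ℝ) (j : Fin n) :
    mismatchProfile (Fin.cons b z) W j.succ = mismatchProfile z (marginal W) j := by
  simp only [mismatchProfile, marginal, sum_cube_succ (fun y => W y * _), sum_mul]
  rw [sum_comm]
  simp [mismatch]

lemma profileEnergy_cons (b : Bool) (z : Cube n) (W : Cube (n + 1) → ℝ) :
    profileEnergy (Fin.cons b z) W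
      = mismatchProfile (Fin.cons b z) W 0 ^ 2 + profileEnergy z (marginal W) := by
  simp [profileEnergy, Fin.sum_univ_succ, mismatchProfile_cons_succ]

lemma mismatchProfile_cons_zero_liftAlong_const (b : Bool) (z : Cube n) (w : Cube n → ℝ) :
    mismatchProfile (Fin.cons b z) (liftAlong (fun _ => b) w) 0 = 0 := by
  refine sum_eq_zero fun x _ => ?_
  by_cases h : x 0 = b <;> simp [liftAlong, mismatch, h]

lemma isWeighting_liftAlong_fiber {A : Finset (Cube (n + 1))} {b : Bool} {w : Cube n → ℝ}
    (hw : IsWeighting (fiber A b) w) : IsWeighting A (liftAlong (fun _ => b) w) :=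
  isWeighting_liftAlong hw.1 fun _ h => mem_fiber.1 <| by_contra (h ∘ hw.2 _)

lemma isWeighting_liftAlong_projection {A : Finset (Cube (n + 1))} {w : Cube n → ℝ}
    (hw : IsWeighting (projection A) w) (b : Bool) :
    IsWeighting A (liftAlong (fun z => if z ∈ fiber A b then b else !b) w) := by
  refine isWeighting_liftAlong hw.1 fun z h => ?_
  have hz : z ∈ fiber A false ∪ fiber A true := by_contra (h ∘ hw.2 z)
  split_ifs with hb
  · exact mem_fiber.1 hb
  · cases b <;> simp_all [mem_fiber]

lemma convexDistSq_cons_le_one_add {A : Finset (Cube (n + 1))} (hA : (projection A).Nonempty)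
    (b : Bool) (z : Cube n) :
    convexDistSq A (Fin.cons b z) ≤ 1 + convexDistSq (projection A) z := by
  obtain ⟨w, hw, hwz⟩ := exists_isWeighting_profileEnergy_eq hA z
  set W := liftAlong (fun z => if z ∈ fiber A b then b else !b) w
  have hmass := mismatchProfile_mem_Icc (isWeighting_liftAlong_projection hw b).1 (Fin.cons b z) 0
  calc convexDistSq A (Fin.cons b z) ≤ profileEnergy (Fin.cons b z) W :=
        convexDistSq_le (isWeighting_liftAlong_projection hw b) _
    _ = mismatchProfile (Fin.cons b z) W 0 ^ 2 + convexDistSq (projection A) z := by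
        rw [profileEnergy_cons, marginal_liftAlong, hwz]
    _ ≤ 1 + convexDistSq (projection A) z := by
        gcongr
        exact pow_le_one₀ hmass.1 hmass.2

lemma convexDistSq_cons_le {A : Finset (Cube (n + 1))} {b : Bool} (hAb : (fiber A b).Nonempty)
    (z : Cube n) {l : ℝ} (hl₀ : 0 ≤ l) (hl₁ : l ≤ 1) :
    convexDistSq A (Fin.cons b z)
      ≤ (1 - l) ^ 2 + l * convexDistSq (fiber A b) z + (1 - l) * convexDistSq (projection A) z := by
  obtain ⟨w₁, hw₁, hwz₁⟩ := exists_isWeighting_profileEnergy_eq hAb z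
  obtain ⟨w₂, hw₂, hwz₂⟩ :=
    exists_isWeighting_profileEnergy_eq (hAb.mono (fiber_subset_projection A b)) z
  set W₁ := liftAlong (fun _ => b) w₁
  set W₂ := liftAlong (fun z => if z ∈ fiber A b then b else !b) w₂
  have hW := (isWeighting_liftAlong_fiber hw₁).convex_comb
    (isWeighting_liftAlong_projection hw₂ b) hl₀ hl₁
  have hmarginal : marginal (l • W₁ + (1 - l) • W₂) = l • w₁ + (1 - l) • w₂ := by
    have hlin : marginal (l • W₁ + (1 - l) • W₂) = l • marginal W₁ + (1 - l) • marginal W₂ := by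
      ext z'
      simp only [marginal, Pi.add_apply, Pi.smul_apply, smul_eq_mul, sum_add_distrib, mul_sum]
    rw [hlin, marginal_liftAlong, marginal_liftAlong]
  have hmass : mismatchProfile (Fin.cons b z) (l • W₁ + (1 - l) • W₂) 0
      = (1 - l) * mismatchProfile (Fin.cons b z) W₂ 0 := by
    simp [mismatchProfile_add, mismatchProfile_smul, W₁, mismatchProfile_cons_zero_liftAlong_const]
  have hW₂ := mismatchProfile_mem_Icc (isWeighting_liftAlong_projection hw₂ b).1 (Fin.cons b z) 0
  calc convexDistSq A (Fin.cons b z) ≤ profileEnergy (Fin.cons b z) (l • W₁ + (1 - l) • W₂) :=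
        convexDistSq_le hW _
    _ = ((1 - l) * mismatchProfile (Fin.cons b z) W₂ 0) ^ 2
          + profileEnergy z (l • w₁ + (1 - l) • w₂) := by
        rw [profileEnergy_cons, hmarginal, hmass]
    _ ≤ (1 - l) ^ 2 + (l * profileEnergy z w₁ + (1 - l) * profileEnergy z w₂) := by
        refine add_le_add (pow_le_pow_left₀ (by nlinarith [hW₂.1, sub_nonneg.2 hl₁]) ?_ 2)
          (profileEnergy_convex_comb_le z w₁ w₂ hl₀ hl₁)
        nlinarith [hW₂.2, sub_nonneg.2 hl₁]
    _ = _ := by rw [hwz₁, hwz₂]; ring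

lemma exp_sub_sq_add_exp_neg_le_two {u : ℝ} (hu₀ : 0 ≤ u) (hu₁ : u ≤ 1 / 2) :
    exp (u - u ^ 2) + exp (-u) ≤ 2 := by
  set f : ℝ → ℝ := fun v => exp (v - v ^ 2) + exp (-v)
  have hf : ∀ v, HasDerivAt f (exp (v - v ^ 2) * (1 - 2 * v) - exp (-v)) v := by
    intro v
    have h₁ : HasDerivAt (fun v : ℝ => v - v ^ 2) (1 - 2 * v) v :=
      ((hasDerivAt_id' v).sub (hasDerivAt_pow 2 v)).congr_deriv (by norm_num)
    exact (h₁.exp.add (hasDerivAt_neg' v).exp).congr_deriv (by ring)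
  -- `f' ≤ 0` amounts to `(1 - 2v) e^g ≤ 1` for `g = 2v - v²`, which follows from `1 - g ≤ e^{-g}`.
  have hanti : AntitoneOn f (Set.Icc 0 (1 / 2)) := by
    refine antitoneOn_of_deriv_nonpos (convex_Icc 0 (1 / 2))
      (fun v _ => (hf v).continuousAt.continuousWithinAt)
      (fun v _ => (hf v).differentiableAt.differentiableWithinAt) fun v hv => ?_
    rw [interior_Icc] at hv
    rw [(hf v).deriv]
    have hg := add_one_le_exp (-(2 * v - v ^ 2))
    have hprod : exp (v - v ^ 2) = exp (2 * v - v ^ 2) * exp (-v) := by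
      rw [← exp_add]; ring_nf
    have hinv : exp (2 * v - v ^ 2) * exp (-(2 * v - v ^ 2)) = 1 := by
      rw [← exp_add]; simp
    rw [hprod]
    nlinarith [exp_pos (-v), exp_pos (2 * v - v ^ 2), sq_nonneg v, hv.1, hv.2,
      mul_pos (exp_pos (-v)) (exp_pos (2 * v - v ^ 2))]
  have := hanti ⟨le_rfl, by norm_num⟩ ⟨hu₀, hu₁⟩ hu₀
  simp only [f] at this
  norm_num at this
  linarith

lemma exists_exponent_le_two_sub {r : ℝ} (hr₀ : 0 < r) (hr₁ : r ≤ 1) :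
    ∃ l ∈ Set.Icc (0 : ℝ) 1, exp ((1 - l) ^ 2 / 4) * r ^ (-l) ≤ 2 - r := by
  have hhalf := exp_sub_sq_add_exp_neg_le_two (u := 1 / 2) (by norm_num) le_rfl
  by_cases hr : r ≤ exp (-(1 / 2))
  · refine ⟨0, ⟨le_rfl, zero_le_one⟩, ?_⟩
    norm_num at hhalf ⊢
    linarith
  · set u := -log r
    have hru : r = exp (-u) := by rw [neg_neg, exp_log hr₀]
    have hu₀ : 0 ≤ u := neg_nonneg.2 (log_nonpos hr₀.le hr₁)
    have hu₁ : u < 1 / 2 := by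
      rw [hru, not_le, exp_lt_exp] at hr
      linarith
    refine ⟨1 - 2 * u, ⟨by linarith, by linarith⟩, ?_⟩
    rw [hru, ← exp_mul, ← exp_add]
    have := exp_sub_sq_add_exp_neg_le_two hu₀ hu₁.le
    convert (le_sub_iff_add_le.2 this) using 2
    ring

lemma sum_rpow_mul_rpow_le {ι : Type*} [Fintype ι] [Nonempty ι] {F G : ι → ℝ}
    (hF : ∀ i, 0 < F i) (hG : ∀ i, 0 < G i) {l : ℝ} (hl₀ : 0 ≤ l) (hl₁ : l ≤ 1) :
    ∑ i, F i ^ l * G i ^ (1 - l) ≤ (∑ i, F i) ^ l * (∑ i, G i) ^ (1 - l) := by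
  have hSF : 0 < ∑ i, F i := sum_pos (fun i _ => hF i) univ_nonempty
  have hSG : 0 < ∑ i, G i := sum_pos (fun i _ => hG i) univ_nonempty
  have hS : 0 < (∑ i, F i) ^ l * (∑ i, G i) ^ (1 - l) := by positivity
  have hamgm : ∀ i, F i ^ l * G i ^ (1 - l) / ((∑ i, F i) ^ l * (∑ i, G i) ^ (1 - l))
      ≤ l * (F i / ∑ i, F i) + (1 - l) * (G i / ∑ i, G i) := by
    intro i
    rw [mul_div_mul_comm, ← div_rpow (hF i).le hSF.le, ← div_rpow (hG i).le hSG.le]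
    exact geom_mean_le_arith_mean2_weighted hl₀ (sub_nonneg.2 hl₁)
      (div_pos (hF i) hSF).le (div_pos (hG i) hSG).le (by ring)
  rw [← div_le_one hS, sum_div]
  calc ∑ i, F i ^ l * G i ^ (1 - l) / ((∑ i, F i) ^ l * (∑ i, G i) ^ (1 - l))
      ≤ ∑ i, (l * (F i / ∑ i, F i) + (1 - l) * (G i / ∑ i, G i)) := sum_le_sum fun i _ => hamgm i
    _ = 1 := by
      rw [sum_add_distrib, ← mul_sum, ← mul_sum, ← sum_div, ← sum_div, div_self hSF.ne',
        div_self hSG.ne']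
      ring

lemma four_sub_div_mul_div_le {s β Q : ℝ} (hs : 0 < s) (hβ : 0 < β) (hQ : 0 ≤ Q) :
    (4 - s / β) * (Q / β) ≤ 4 * Q / s := by
  have key : (4 - s / β) / β ≤ 4 / s := by
    rw [div_le_div_iff₀ hβ hs, sub_mul, div_mul_eq_mul_div, ← sub_nonneg]
    have : 4 * β - (4 * s - s * s / β) = (2 * β - s) ^ 2 / β := by field_simp; ring
    rw [this]; positivity
  calc (4 - s / β) * (Q / β) = (4 - s / β) / β * Q := by ring
    _ ≤ 4 / s * Q := mul_le_mul_of_nonneg_right key hQ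
    _ = 4 * Q / s := by ring

lemma exp_convexDistSq_cons_le {A : Finset (Cube (n + 1))} {b : Bool}
    (hAb : (fiber A b).Nonempty) (z : Cube n) {l : ℝ} (hl₀ : 0 ≤ l) (hl₁ : l ≤ 1) :
    exp (convexDistSq A (Fin.cons b z) / 4) ≤ exp ((1 - l) ^ 2 / 4)
      * (exp (convexDistSq (fiber A b) z / 4) ^ l
        * exp (convexDistSq (projection A) z / 4) ^ (1 - l)) := by
  rw [← exp_mul, ← exp_mul, ← exp_add, ← exp_add, exp_le_exp]
  linarith [convexDistSq_cons_le hAb z hl₀ hl₁]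

lemma mul_inv_rpow_mul_rpow_one_sub {Q r : ℝ} (hQ : 0 < Q) (hr : 0 < r) (l : ℝ) :
    (Q * r⁻¹) ^ l * Q ^ (1 - l) = r ^ (-l) * Q := by
  rw [mul_rpow hQ.le (inv_nonneg.2 hr.le), mul_right_comm, ← rpow_add hQ, inv_rpow hr.le,
    ← rpow_neg hr.le, add_sub_cancel, rpow_one, mul_comm]

lemma sum_exp_convexDistSq_cons_le_two_mul {A : Finset (Cube (n + 1))}
    (hA : (projection A).Nonempty) {Q : ℝ}
    (hQ : ∑ z, exp (convexDistSq (projection A) z / 4) ≤ Q) (b : Bool) :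
    ∑ z, exp (convexDistSq A (Fin.cons b z) / 4) ≤ 2 * Q := by
  have hexp : exp (1 / 4 : ℝ) ≤ 2 := by
    have := exp_sub_sq_add_exp_neg_le_two (u := 1 / 2) (by norm_num) le_rfl
    norm_num at this
    linarith [exp_pos (-(1 / 2 : ℝ))]
  calc ∑ z, exp (convexDistSq A (Fin.cons b z) / 4)
      ≤ ∑ z, exp (1 / 4) * exp (convexDistSq (projection A) z / 4) := by
        refine sum_le_sum fun z _ => ?_
        rw [← exp_add, exp_le_exp]
        linarith [convexDistSq_cons_le_one_add hA b z]
    _ ≤ 2 * Q := by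
        rw [← mul_sum]
        exact mul_le_mul hexp hQ (sum_nonneg fun _ _ => (exp_pos _).le) zero_le_two

lemma sum_exp_convexDistSq_cons_le_of_nonempty
    (ih : ∀ B : Finset (Cube n), B.Nonempty → ∑ z, exp (convexDistSq B z / 4) ≤ 4 ^ n / #B)
    {A : Finset (Cube (n + 1))} {b : Bool} (hAb : (fiber A b).Nonempty) :
    ∑ z, exp (convexDistSq A (Fin.cons b z) / 4)
      ≤ (2 - #(fiber A b) / #(projection A)) * (4 ^ n / #(projection A)) := by
  have hB := hAb.mono (fiber_subset_projection A b)
  have hβ : (0 : ℝ) < #(projection A) := by exact_mod_cast hB.card_pos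
  have ha : (0 : ℝ) < #(fiber A b) := by exact_mod_cast hAb.card_pos
  set Q : ℝ := 4 ^ n / #(projection A)
  set r : ℝ := #(fiber A b) / #(projection A)
  have hr₁ : r ≤ 1 :=
    (div_le_one hβ).2 (by exact_mod_cast card_le_card (fiber_subset_projection A b))
  obtain ⟨l, ⟨hl₀, hl₁⟩, hl⟩ := exists_exponent_le_two_sub (div_pos ha hβ) hr₁
  have hsplit : 4 ^ n / (#(fiber A b) : ℝ) = Q * r⁻¹ := by
    simp only [Q, r]; field_simp
  calc ∑ z, exp (convexDistSq A (Fin.cons b z) / 4)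
      ≤ ∑ z, exp ((1 - l) ^ 2 / 4) * (exp (convexDistSq (fiber A b) z / 4) ^ l
          * exp (convexDistSq (projection A) z / 4) ^ (1 - l)) :=
        sum_le_sum fun z _ => exp_convexDistSq_cons_le hAb z hl₀ hl₁
    _ ≤ exp ((1 - l) ^ 2 / 4) * ((∑ z, exp (convexDistSq (fiber A b) z / 4)) ^ l
          * (∑ z, exp (convexDistSq (projection A) z / 4)) ^ (1 - l)) := by
        rw [← mul_sum]
        gcongr
        exact sum_rpow_mul_rpow_le (fun _ => exp_pos _) (fun _ => exp_pos _) hl₀ hl₁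
    _ ≤ exp ((1 - l) ^ 2 / 4) * ((Q * r⁻¹) ^ l * Q ^ (1 - l)) := by
        have ihA := ih _ hAb
        have ihB := ih _ hB
        rw [← hsplit]
        gcongr
    _ = exp ((1 - l) ^ 2 / 4) * r ^ (-l) * Q := by
        rw [mul_inv_rpow_mul_rpow_one_sub (by positivity) (div_pos ha hβ), mul_assoc]
    _ ≤ (2 - r) * Q := by gcongr

lemma sum_exp_convexDistSq_cons_le
    (ih : ∀ B : Finset (Cube n), B.Nonempty → ∑ z, exp (convexDistSq B z / 4) ≤ 4 ^ n / #B)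
    {A : Finset (Cube (n + 1))} (hA : A.Nonempty) (b : Bool) :
    ∑ z, exp (convexDistSq A (Fin.cons b z) / 4)
      ≤ (2 - #(fiber A b) / #(projection A)) * (4 ^ n / #(projection A)) := by
  rcases (fiber A b).eq_empty_or_nonempty with hAb | hAb
  · have hB := projection_nonempty hA
    simpa [hAb] using sum_exp_convexDistSq_cons_le_two_mul hB (ih _ hB) b
  · exact sum_exp_convexDistSq_cons_le_of_nonempty ih hAb

theorem sum_exp_convexDistSq_le :
    ∀ {n : ℕ} (A : Finset (Cube n)), A.Nonempty →
      ∑ x, exp (convexDistSq A x / 4) ≤ 4 ^ n / #A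
  | 0, A, hA => by
    have hA₁ : #A = 1 := le_antisymm (card_le_univ A |>.trans (by simp)) hA.card_pos
    have hzero : ∀ x, convexDistSq A x = 0 := fun x => by
      obtain ⟨w, -, hw⟩ := exists_isWeighting_profileEnergy_eq hA x
      simp [← hw, profileEnergy]
    simp [hzero, hA₁]
  | n + 1, A, hA => by
    have ih := @sum_exp_convexDistSq_le n
    have hs : (0 : ℝ) < #A := by exact_mod_cast hA.card_pos
    have hβ : (0 : ℝ) < #(projection A) := by exact_mod_cast (projection_nonempty hA).card_pos
    have hcard : (#A : ℝ) = #(fiber A false) + #(fiber A true) := by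
      exact_mod_cast card_eq_card_fiber_add_card_fiber A
    calc ∑ x, exp (convexDistSq A x / 4)
        ≤ (2 - #(fiber A true) / #(projection A)) * (4 ^ n / #(projection A))
          + (2 - #(fiber A false) / #(projection A)) * (4 ^ n / #(projection A)) := by
          rw [sum_cube_succ, Fintype.sum_bool]
          exact add_le_add (sum_exp_convexDistSq_cons_le ih hA true)
            (sum_exp_convexDistSq_cons_le ih hA false)
      _ = (4 - #A / #(projection A)) * (4 ^ n / #(projection A)) := by rw [hcard]; ring
      _ ≤ 4 * 4 ^ n / #A := four_sub_div_mul_div_le hs hβ (by positivity)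
      _ = 4 ^ (n + 1) / #A := by ring

lemma card_mul_card_mul_exp_le {A T : Finset (Cube n)} {D : ℝ}
    (hT : ∀ x ∈ T, D ≤ convexDistSq A x) : #A * #T * exp (D / 4) ≤ 4 ^ n := by
  rcases A.eq_empty_or_nonempty with rfl | hA
  · simp
  have hpos : (0 : ℝ) < #A := by exact_mod_cast hA.card_pos
  have hT' : #T * exp (D / 4) ≤ 4 ^ n / #A :=
    calc #T * exp (D / 4) = ∑ _x ∈ T, exp (D / 4) := by simp
      _ ≤ ∑ x ∈ T, exp (convexDistSq A x / 4) :=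
          sum_le_sum fun x hx => exp_le_exp.2 (by linarith [hT x hx])
      _ ≤ ∑ x, exp (convexDistSq A x / 4) :=
          sum_le_sum_of_subset_of_nonneg (subset_univ T) fun _ _ _ => (exp_pos _).le
      _ ≤ 4 ^ n / #A := sum_exp_convexDistSq_le A hA
  rw [le_div_iff₀ hpos] at hT'
  linarith

/-! ### Rademacher sums -/

def boolSign (b : Bool) : ℝ := if b then 1 else -1

lemma abs_boolSign_sub_boolSign (b b' : Bool) :
    |boolSign b - boolSign b'| = 2 * if b = b' then 0 else 1 := by
  cases b <;> cases b' <;> norm_num [boolSign]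

def signSum (c : Fin n → ℝ) (s : Cube n) : ℝ := ∑ a, c a * boolSign (s a)

lemma signSum_cons (c : Fin (n + 1) → ℝ) (b : Bool) (s : Cube n) :
    signSum c (Fin.cons b s) = c 0 * boolSign b + signSum (Fin.tail c) s := by
  simp [signSum, Fin.sum_univ_succ, Fin.tail]

lemma sum_cube_const (r : ℝ) : ∑ _s : Cube n, r = 2 ^ n * r := by simp

lemma sum_signSum_sq : ∀ {n : ℕ} (c : Fin n → ℝ), ∑ s, signSum c s ^ 2 = 2 ^ n * ∑ a, c a ^ 2
  | 0, c => by simp [signSum]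
  | n + 1, c => by
    have ih := sum_signSum_sq (Fin.tail c)
    simp only [sum_cube_succ, signSum_cons, Fintype.sum_bool, boolSign, Fin.sum_univ_succ] at ih ⊢
    simp only [if_true, Bool.false_eq_true, if_false, ← sum_add_distrib]
    have : ∀ s : Cube n, (c 0 * 1 + signSum (Fin.tail c) s) ^ 2
        + (c 0 * -1 + signSum (Fin.tail c) s) ^ 2 = 2 * c 0 ^ 2 + 2 * signSum (Fin.tail c) s ^ 2 :=
      fun s => by ring
    simp only [this, sum_add_distrib, ← mul_sum, ih, sum_cube_const, Fin.tail]
    ring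

lemma sum_signSum_pow_four_le :
    ∀ {n : ℕ} (c : Fin n → ℝ), ∑ s, signSum c s ^ 4 ≤ 3 * 2 ^ n * (∑ a, c a ^ 2) ^ 2
  | 0, c => by simp [signSum]
  | n + 1, c => by
    have ih := sum_signSum_pow_four_le (Fin.tail c)
    have hsq := sum_signSum_sq (Fin.tail c)
    simp only [sum_cube_succ, signSum_cons, Fintype.sum_bool, boolSign, Fin.sum_univ_succ]
    simp only [if_true, Bool.false_eq_true, if_false, ← sum_add_distrib]
    have hexpand : ∀ s : Cube n, (c 0 * 1 + signSum (Fin.tail c) s) ^ 4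
        + (c 0 * -1 + signSum (Fin.tail c) s) ^ 4
          = 2 * c 0 ^ 4 + 12 * c 0 ^ 2 * signSum (Fin.tail c) s ^ 2
            + 2 * signSum (Fin.tail c) s ^ 4 := fun s => by ring
    simp only [hexpand, sum_add_distrib, ← mul_sum, hsq, sum_cube_const]
    simp only [Fin.tail] at ih hsq ⊢
    rw [show (2 : ℝ) ^ (n + 1) = 2 * 2 ^ n by ring]
    nlinarith [mul_nonneg (pow_nonneg zero_le_two n) (Even.pow_nonneg (by decide : Even 4) (c 0))]

def signVec (s : Cube n) : EuclideanSpace ℝ (Fin n) := WithLp.toLp 2 fun j => boolSign (s j)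

lemma inner_signVec (v : EuclideanSpace ℝ (Fin n)) (s : Cube n) :
    ⟪v, signVec s⟫_ℝ = signSum v.ofLp s := by
  simp [PiLp.inner_apply, signVec, signSum, mul_comm]

lemma sum_inner_signVec_sq (v : EuclideanSpace ℝ (Fin n)) :
    ∑ s, ⟪v, signVec s⟫_ℝ ^ 2 = 2 ^ n * ‖v‖ ^ 2 := by
  simp [inner_signVec, sum_signSum_sq, EuclideanSpace.norm_sq_eq]

lemma sum_inner_signVec_pow_four_le (v : EuclideanSpace ℝ (Fin n)) :
    ∑ s, ⟪v, signVec s⟫_ℝ ^ 4 ≤ 3 * 2 ^ n * ‖v‖ ^ 4 := by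
  have := sum_signSum_pow_four_le v.ofLp
  rw [show ‖v‖ ^ 4 = (‖v‖ ^ 2) ^ 2 by ring]
  simpa [inner_signVec, EuclideanSpace.norm_sq_eq] using this

lemma norm_sum_smul_signVec_sub_le {w : Cube n → ℝ} (hw : ∀ y, 0 ≤ w y) (x : Cube n) :
    ‖∑ y, w y • (signVec x - signVec y)‖ ≤ 2 * √(profileEnergy x w) := by
  have hcoord : ∀ a, |∑ y, w y * (boolSign (x a) - boolSign (y a))|
      ≤ 2 * mismatchProfile x w a := fun a =>
    calc |∑ y, w y * (boolSign (x a) - boolSign (y a))|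
        ≤ ∑ y, |w y * (boolSign (x a) - boolSign (y a))| := abs_sum_le_sum_abs _ _
      _ = 2 * mismatchProfile x w a := by
        simp only [abs_mul, abs_of_nonneg (hw _), abs_boolSign_sub_boolSign, mismatchProfile,
          mul_sum, mismatch]
        exact sum_congr rfl fun y _ => by ring
  rw [EuclideanSpace.norm_eq, show 2 * √(profileEnergy x w) = √(4 * profileEnergy x w) by
    rw [sqrt_mul' _ (profileEnergy_nonneg x w), show (4 : ℝ) = 2 ^ 2 by norm_num,
      sqrt_sq zero_le_two]]
  refine sqrt_le_sqrt ?_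
  simp only [profileEnergy, mul_sum]
  refine sum_le_sum fun a _ => ?_
  have := pow_le_pow_left₀ (abs_nonneg _) (hcoord a) 2
  norm_num [signVec, mul_pow, sq_abs] at this ⊢
  exact this

/-! ### Coefficients along an orthonormal family -/

section Coefficients

variable {E : Type*} [NormedAddCommGroup E] [InnerProductSpace ℝ E] {ι : Type*}

def coeffs (z : ι → E) : E →ₗ[ℝ] EuclideanSpace ℝ ι where
  toFun v := WithLp.toLp 2 fun i => ⟪z i, v⟫_ℝ
  map_add' v w := by ext i; simp [inner_add_right]
  map_smul' c v := by ext i; simp [inner_smul_right]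

variable [Fintype ι]

lemma sq_norm_coeffs (z : ι → E) (v : E) : ‖coeffs z v‖ ^ 2 = ∑ i, ⟪z i, v⟫_ℝ ^ 2 := by
  simp [EuclideanSpace.norm_sq_eq, coeffs]

lemma norm_coeffs_le {z : ι → E} (hz : Orthonormal ℝ z) (v : E) : ‖coeffs z v‖ ≤ ‖v‖ := by
  rw [← pow_le_pow_iff_left₀ (norm_nonneg _) (norm_nonneg _) two_ne_zero, sq_norm_coeffs]
  simpa using hz.sum_inner_products_le (s := univ) v

lemma sq_norm_coeffs_le {z : ι → E} {v : E} {t : ℝ} (h : ∀ i, |⟪z i, v⟫_ℝ| ≤ t) :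
    ‖coeffs z v‖ ^ 2 ≤ Fintype.card ι * t ^ 2 := by
  rw [sq_norm_coeffs]
  calc ∑ i, ⟪z i, v⟫_ℝ ^ 2 ≤ ∑ _i : ι, t ^ 2 := sum_le_sum fun i _ => by
        simpa only [sq_abs] using pow_le_pow_left₀ (abs_nonneg _) (h i) 2
    _ = Fintype.card ι * t ^ 2 := by simp

end Coefficients

section Orthonormal

variable {ι : Type*} [Fintype ι] {z : ι → EuclideanSpace ℝ (Fin n)}

-- Paley–Zygmund, for the counting measure.
lemma sq_sum_sub_le_card_filter_lt_mul_sum_sq {Ω : Type*} [Fintype Ω] (Y : Ω → ℝ) {t : ℝ}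
    (ht : 0 ≤ t) (htY : Fintype.card Ω * t ≤ ∑ ω, Y ω) :
    (∑ ω, Y ω - Fintype.card Ω * t) ^ 2 ≤ #{ω | t < Y ω} * ∑ ω, Y ω ^ 2 := by
  have hlow : ∑ ω with ¬ t < Y ω, Y ω ≤ Fintype.card Ω * t :=
    calc ∑ ω with ¬ t < Y ω, Y ω ≤ ∑ ω with ¬ t < Y ω, t :=
          sum_le_sum fun ω hω => not_lt.1 (mem_filter.1 hω).2
      _ ≤ Fintype.card Ω * t := by
          rw [sum_const, nsmul_eq_mul]
          exact mul_le_mul_of_nonneg_right (by exact_mod_cast card_le_univ _) ht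
  have hhigh : ∑ ω, Y ω - Fintype.card Ω * t ≤ ∑ ω with t < Y ω, Y ω := by
    linarith [sum_filter_add_sum_filter_not univ (fun ω => t < Y ω) Y]
  calc (∑ ω, Y ω - Fintype.card Ω * t) ^ 2 ≤ (∑ ω with t < Y ω, Y ω) ^ 2 :=
        pow_le_pow_left₀ (sub_nonneg.2 htY) hhigh 2
    _ ≤ #{ω | t < Y ω} * ∑ ω with t < Y ω, Y ω ^ 2 := sq_sum_le_card_mul_sum_sq
    _ ≤ #{ω | t < Y ω} * ∑ ω, Y ω ^ 2 := mul_le_mul_of_nonneg_left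
        (sum_le_sum_of_subset_of_nonneg (subset_univ _) fun ω _ _ => sq_nonneg (Y ω))
        (Nat.cast_nonneg _)

lemma norm_coeffs_signVec_le (hz : Orthonormal ℝ z) {A : Finset (Cube n)} (hA : A.Nonempty) {R : ℝ}
    (hR : ∀ y ∈ A, ‖coeffs z (signVec y)‖ ≤ R) (x : Cube n) :
    ‖coeffs z (signVec x)‖ ≤ R + 2 * √(convexDistSq A x) := by
  obtain ⟨w, hw, hwx⟩ := exists_isWeighting_profileEnergy_eq hA x
  have hsum : ∑ y, w y = ∑ y ∈ A, w y :=
    (sum_subset (subset_univ A) fun y _ hy => hw.2 y hy).symm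
  have hcenter : ‖∑ y, w y • coeffs z (signVec y)‖ ≤ R := by
    rw [← sum_subset (subset_univ A) fun y _ hy => by simp [hw.2 y hy], ← mem_closedBall_zero_iff]
    exact (convex_closedBall 0 R).sum_mem (fun y _ => hw.1.1 y) (hsum ▸ hw.1.2)
      fun y hy => mem_closedBall_zero_iff.2 (hR y hy)
  have hsplit : coeffs z (signVec x) = ∑ y, w y • coeffs z (signVec y)
      + coeffs z (∑ y, w y • (signVec x - signVec y)) := by
    simp only [map_sum, map_smul, map_sub, smul_sub, sum_sub_distrib, ← sum_smul, hw.1.2,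
      one_smul]
    abel
  rw [hsplit, ← hwx]
  exact (norm_add_le _ _).trans (add_le_add hcenter ((norm_coeffs_le hz _).trans
    (norm_sum_smul_signVec_sub_le hw.1.1 x)))

lemma sum_sq_norm_coeffs_signVec (hz : Orthonormal ℝ z) :
    ∑ s, ‖coeffs z (signVec s)‖ ^ 2 = 2 ^ n * Fintype.card ι := by
  simp only [sq_norm_coeffs]
  rw [sum_comm]
  simp [sum_inner_signVec_sq, hz.1, mul_comm]

lemma sum_sq_norm_coeffs_signVec_sq_le (hz : Orthonormal ℝ z) :
    ∑ s, (‖coeffs z (signVec s)‖ ^ 2) ^ 2 ≤ 3 * 2 ^ n * Fintype.card ι ^ 2 :=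
  calc ∑ s, (‖coeffs z (signVec s)‖ ^ 2) ^ 2
      ≤ ∑ s, Fintype.card ι * ∑ i, ⟪z i, signVec s⟫_ℝ ^ 4 := sum_le_sum fun s _ => by
        rw [sq_norm_coeffs]
        refine (sq_sum_le_card_mul_sum_sq (s := univ)
          (f := fun i => ⟪z i, signVec s⟫_ℝ ^ 2)).trans_eq ?_
        simp only [card_univ, ← pow_mul]
    _ = Fintype.card ι * ∑ i, ∑ s, ⟪z i, signVec s⟫_ℝ ^ 4 := by rw [← mul_sum, sum_comm]
    _ ≤ Fintype.card ι * ∑ _i : ι, 3 * 2 ^ n := by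
        gcongr with i
        simpa [hz.1 i] using sum_inner_signVec_pow_four_le (z i)
    _ = 3 * 2 ^ n * Fintype.card ι ^ 2 := by simp; ring

lemma card_lt_sq_norm_coeffs_signVec (hz : Orthonormal ℝ z) [Nonempty ι] {θ : ℝ} (hθ₀ : 0 ≤ θ)
    (hθ₁ : θ ≤ 1) :
    (1 - θ) ^ 2 * 2 ^ n ≤ 3 * #{s | θ * Fintype.card ι < ‖coeffs z (signVec s)‖ ^ 2} := by
  have hk : (0 : ℝ) < Fintype.card ι := by exact_mod_cast Fintype.card_pos
  have hcard : (Fintype.card (Cube n) : ℝ) = 2 ^ n := by simp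
  have hpz := sq_sum_sub_le_card_filter_lt_mul_sum_sq (fun s => ‖coeffs z (signVec s)‖ ^ 2)
    (t := θ * Fintype.card ι) (by positivity) (by
      rw [hcard, sum_sq_norm_coeffs_signVec hz, ← mul_assoc, mul_comm _ θ, mul_assoc]
      exact mul_le_of_le_one_left (by positivity) hθ₁)
  rw [hcard, sum_sq_norm_coeffs_signVec hz] at hpz
  have := hpz.trans (mul_le_mul_of_nonneg_left (sum_sq_norm_coeffs_signVec_sq_le hz)
    (by positivity))
  have h2n : (0 : ℝ) < 2 ^ n := by positivity
  nlinarith [mul_pos (mul_pos h2n h2n) (mul_pos hk hk)]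

lemma card_sq_norm_coeffs_signVec_le_half_le (hz : Orthonormal ℝ z) [Nonempty ι] :
    12 * #{s | ‖coeffs z (signVec s)‖ ^ 2 ≤ Fintype.card ι / 2} ≤ (11 * 2 ^ n : ℝ) := by
  have hT := card_lt_sq_norm_coeffs_signVec hz (θ := 1 / 2) (by norm_num) (by norm_num)
  have hsplit := card_filter_add_card_filter_not (s := (univ : Finset (Cube n)))
    (p := fun s => 1 / 2 * Fintype.card ι < ‖coeffs z (signVec s)‖ ^ 2)
  simp only [not_lt, card_univ, Fintype.card_fun, Fintype.card_bool, Fintype.card_fin] at hsplit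
  have hsplit' : (#{s | 1 / 2 * Fintype.card ι < ‖coeffs z (signVec s)‖ ^ 2} : ℝ)
      + #{s | ‖coeffs z (signVec s)‖ ^ 2 ≤ 1 / 2 * Fintype.card ι} = 2 ^ n := by
    exact_mod_cast hsplit
  rw [show (Fintype.card ι : ℝ) / 2 = 1 / 2 * Fintype.card ι by ring]
  linarith

lemma le_convexDistSq_of_lt_sq_norm_coeffs_signVec (hz : Orthonormal ℝ z) {A : Finset (Cube n)}
    (hA : A.Nonempty) (hAz : ∀ y ∈ A, ‖coeffs z (signVec y)‖ ^ 2 ≤ Fintype.card ι / 2)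
    {x : Cube n} (hx : 8 / 9 * Fintype.card ι < ‖coeffs z (signVec x)‖ ^ 2) :
    Fintype.card ι / 72 ≤ convexDistSq A x := by
  have hlip := norm_coeffs_signVec_le hz hA (R := √(Fintype.card ι / 2))
    (fun y hy => le_sqrt_of_sq_le (hAz y hy)) x
  have ha : √(Fintype.card ι / 2 : ℝ) ^ 2 = Fintype.card ι / 2 := sq_sqrt (by positivity)
  have he : √(convexDistSq A x) ^ 2 = convexDistSq A x := sq_sqrt (convexDistSq_nonneg _ _)
  have hsq := pow_le_pow_left₀ (norm_nonneg _) hlip 2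
  -- `‖·‖ ≤ √(k/2) + 2√D` and `‖·‖² > 8k/9 = (4/3)² (k/2)` force `√D ≥ √(k/2) / 6`
  nlinarith [sqrt_nonneg (Fintype.card ι / 2 : ℝ), sqrt_nonneg (convexDistSq A x)]

lemma card_sq_norm_coeffs_signVec_le_half_le_exp (hz : Orthonormal ℝ z) [Nonempty ι] :
    #{s | ‖coeffs z (signVec s)‖ ^ 2 ≤ Fintype.card ι / 2}
      ≤ 243 * 2 ^ n * exp (-(Fintype.card ι / 288)) := by
  set A : Finset (Cube n) := {s | ‖coeffs z (signVec s)‖ ^ 2 ≤ Fintype.card ι / 2}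
  set T : Finset (Cube n) := {s | 8 / 9 * Fintype.card ι < ‖coeffs z (signVec s)‖ ^ 2}
  rcases A.eq_empty_or_nonempty with hA | hA
  · rw [hA, card_empty, Nat.cast_zero]; positivity
  have hT : (2 : ℝ) ^ n ≤ 243 * #T := by
    have := card_lt_sq_norm_coeffs_signVec hz (θ := 8 / 9) (by norm_num) (by norm_num)
    linarith
  have hAT := card_mul_card_mul_exp_le (A := A) (T := T) fun x hx =>
    le_convexDistSq_of_lt_sq_norm_coeffs_signVec hz hA (fun y hy => (mem_filter.1 hy).2)
      (mem_filter.1 hx).2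
  rw [show (Fintype.card ι : ℝ) / 72 / 4 = Fintype.card ι / 288 by ring,
    show (4 : ℝ) ^ n = 2 ^ n * 2 ^ n by rw [← mul_pow]; norm_num] at hAT
  rw [exp_neg, ← div_eq_mul_inv, le_div_iff₀ (exp_pos _)]
  have h2n : (0 : ℝ) < 2 ^ n := by positivity
  refine le_of_mul_le_mul_right ?_ h2n
  calc #A * exp (Fintype.card ι / 288) * 2 ^ n
      ≤ #A * exp (Fintype.card ι / 288) * (243 * #T) := by gcongr
    _ = 243 * (#A * #T * exp (Fintype.card ι / 288)) := by ring
    _ ≤ 243 * (2 ^ n * 2 ^ n) := by gcongr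
    _ = 243 * 2 ^ n * 2 ^ n := by ring

end Orthonormal

/-! ### Choice of the constant -/

lemma exp_le_two_rpow {x : ℝ} (hx : x ≤ 0) : exp x ≤ 2 ^ x := by
  rw [rpow_def_of_pos two_pos, exp_le_exp]
  nlinarith [log_two_lt_d9]

lemma exists_pos_forall_le_two_rpow {q C α : ℝ} (hq : q < 1) (hα : 0 < α) :
    ∃ c : ℝ, 0 < c ∧
      ∀ (k : ℕ) (p : ℝ), p ≤ q → p ≤ C * exp (-(α * k)) → p ≤ 2 ^ (-(c * k)) := by
  set q' := max q (1 / 2)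
  have hq'₀ : 0 < q' := lt_max_of_lt_right one_half_pos
  have hq'₁ : q' < 1 := max_lt hq one_half_lt_one
  obtain ⟨K, hK⟩ := exists_nat_ge (2 * log (max C 1) / α)
  have hlogq : 0 < -log q' := neg_pos.2 (log_neg hq'₀ hq'₁)
  set c := min (α / 2) (-log q' / (K + 1))
  have hc : 0 < c := lt_min (by positivity) (by positivity)
  refine ⟨c, hc, fun k p hpq hpC => (le_trans ?_ (exp_le_two_rpow (by
    have := k.cast_nonneg (α := ℝ); nlinarith)))⟩
  rcases le_or_gt k K with hk | hk
  · have hck : c * k ≤ -log q' :=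
      calc c * k ≤ -log q' / (K + 1) * (K + 1) := by
            gcongr
            · exact min_le_right _ _
            · exact (Nat.cast_le.2 hk).trans (le_add_of_nonneg_right zero_le_one)
        _ = -log q' := div_mul_cancel₀ _ (by positivity)
    calc p ≤ q' := hpq.trans (le_max_left _ _)
      _ = exp (log q') := (exp_log hq'₀).symm
      _ ≤ exp (-(c * k)) := exp_le_exp.2 (by linarith)
  · have hlogC : log (max C 1) ≤ α * k / 2 := by
      rw [div_le_iff₀ hα] at hK
      nlinarith [(Nat.cast_lt (α := ℝ)).2 hk]
    have hcα : c * k ≤ α / 2 * k := by gcongr; exact min_le_left _ _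
    calc p ≤ max C 1 * exp (-(α * k)) :=
          hpC.trans (mul_le_mul_of_nonneg_right (le_max_left _ _) (exp_pos _).le)
      _ = exp (log (max C 1) - α * k) := by
          rw [exp_sub, exp_log (lt_max_of_lt_right one_pos), exp_neg, div_eq_mul_inv]
      _ ≤ exp (-(c * k)) := exp_le_exp.2 (by linarith)

end BoolCube

open BoolCube

/-- The hypercube is a memory-sensitive base: for `h` uniform on `{±1}^d` and `Z` with
`k` orthonormal columns, `ℙ(‖Zᵀh‖_∞ ≤ t) ≤ 2^{-ck}` for all `t ∈ (0, 1/√2]`, where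
`c > 0` is an absolute constant.  Probability is expressed by counting sign patterns. -/
theorem stmt_4 :
    ∃ c : ℝ, 0 < c ∧
      ∀ (d k : ℕ) (z : Fin k → EuclideanSpace ℝ (Fin d)), Orthonormal ℝ z →
        ∀ t : ℝ, 0 < t → t ≤ 1 / Real.sqrt 2 →
          ((Finset.univ.filter fun s : Fin d → Bool =>
              ∀ i : Fin k,
                |(⟪z i, (WithLp.toLp 2 (fun j => if s j then (1 : ℝ) else -1) : EuclideanSpace ℝ (Fin d))⟫_ℝ)| ≤ t
            ).card : ℝ) / 2 ^ d ≤ 2 ^ (-(c * k)) := by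
  obtain ⟨c, hc, hbound⟩ := exists_pos_forall_le_two_rpow (q := 11 / 12) (C := 243)
    (α := 1 / 288) (by norm_num) (by norm_num)
  refine ⟨c, hc, fun d k z hz t ht ht₂ => ?_⟩
  let E : Finset (Cube d) := {s | ∀ i, |⟪z i, signVec s⟫_ℝ| ≤ t}
  let A : Finset (Cube d) := {s | ‖coeffs z (signVec s)‖ ^ 2 ≤ k / 2}
  change (#E : ℝ) / 2 ^ d ≤ 2 ^ (-(c * k))
  have h2d : (0 : ℝ) < 2 ^ d := by positivity
  rcases k.eq_zero_or_pos with rfl | hk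
  · rw [Nat.cast_zero, mul_zero, neg_zero, rpow_zero, div_le_one h2d]
    exact_mod_cast (card_le_univ E).trans (by simp)
  have : Nonempty (Fin k) := ⟨⟨0, hk⟩⟩
  have ht₂' : t ^ 2 ≤ 1 / 2 := by
    have := pow_le_pow_left₀ ht.le ht₂ 2
    rwa [div_pow, sq_sqrt zero_le_two, one_pow] at this
  have hEA : (#E : ℝ) ≤ #A := by
    refine Nat.cast_le.2 (card_le_card fun s hs => mem_filter.2 ⟨mem_univ s, ?_⟩)
    have := sq_norm_coeffs_le (mem_filter.1 hs).2
    simp only [Fintype.card_fin] at this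
    nlinarith
  have hA₁ := card_sq_norm_coeffs_signVec_le_half_le hz
  have hA₂ := card_sq_norm_coeffs_signVec_le_half_le_exp hz
  simp only [Fintype.card_fin] at hA₁ hA₂
  apply hbound k
  · rw [div_le_iff₀ h2d]; linarith
  · rw [div_le_iff₀ h2d]
    calc (#E : ℝ) ≤ 243 * 2 ^ d * exp (-(k / 288)) := hEA.trans hA₂
      _ = _ := by ring_nf
end

section
/- Let $f: B \to \mathbb{R}$ be a convex, $L$-Lipschitz function on the closed unit ball $B \subset \mathbb{R}^d$, let $r \in (0,1)$, and define $h(\x) = f(0) + \frac{L}{1-r}((1+r)\|\x\|_2 - 2r)$ for $\x \in \mathbb{R}^d$, and $g(\x) = \max\{f(\x), h(\x)\}$ for $\|\x\|_2 < 1$ and $g(\x) = h(\x)$ for $\|\x\|_2 \ge 1$. Then $g$ is convex, $L\frac{1+r}{1-r}$-Lipschitz on $\mathbb{R}^d$, and $g(\x) = f(\x)$ whenever $\|\x\|_2 \le r$. -/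
open Metric

/-- Lifting a convex Lipschitz function on the unit ball to all of `ℝ^d` (Lemma 26):
`g = max(f, h)` inside the ball and `g = h` outside, where
`h(x) = f(0) + (L/(1−r))((1+r)‖x‖ − 2r)`, is convex, `L(1+r)/(1−r)`-Lipschitz,
and agrees with `f` on the ball of radius `r`. -/
theorem stmt_10 (d : ℕ) (L r : ℝ) (hL : 0 ≤ L) (hr0 : 0 < r) (hr1 : r < 1)
    (f : EuclideanSpace ℝ (Fin d) → ℝ)
    (hconv : ConvexOn ℝ (closedBall (0 : EuclideanSpace ℝ (Fin d)) 1) f)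
    (hlip : LipschitzOnWith L.toNNReal f (closedBall (0 : EuclideanSpace ℝ (Fin d)) 1))
    (h g : EuclideanSpace ℝ (Fin d) → ℝ)
    (hh : ∀ x, h x = f 0 + L / (1 - r) * ((1 + r) * ‖x‖ - 2 * r))
    (hg : ∀ x, g x = if ‖x‖ < 1 then max (f x) (h x) else h x) :
    ConvexOn ℝ Set.univ g ∧
    LipschitzWith (L * ((1 + r) / (1 - r))).toNNReal g ∧
    ∀ x, ‖x‖ ≤ r → g x = f x := by
  have hr1' : (0:ℝ) < 1 - r := by linarith
  set M : ℝ := L * ((1 + r) / (1 - r)) with hMdef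
  have hM0 : 0 ≤ M := by positivity
  have hLM : L ≤ M := by
    have h1 : (1:ℝ) ≤ (1 + r) / (1 - r) := (one_le_div hr1').2 (by linarith)
    calc L = L * 1 := (mul_one L).symm
      _ ≤ L * ((1 + r) / (1 - r)) := mul_le_mul_of_nonneg_left h1 hL
  -- f is Lipschitz (real form) on the ball
  have hflip : ∀ x ∈ closedBall (0 : EuclideanSpace ℝ (Fin d)) 1, ∀ y ∈ closedBall (0 : EuclideanSpace ℝ (Fin d)) 1,
      f x ≤ f y + L * ‖x - y‖ := by
    intro x hx y hy
    have := hlip.dist_le_mul x hx y hy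
    rw [Real.dist_eq, Real.coe_toNNReal L hL, dist_eq_norm] at this
    have := abs_le.1 this
    linarith [this.1, this.2]
  have h0mem : (0 : EuclideanSpace ℝ (Fin d)) ∈ closedBall (0 : EuclideanSpace ℝ (Fin d)) 1 := by simp
  -- alternate form of h
  have hh' : ∀ x : EuclideanSpace ℝ (Fin d), h x = (f 0 + L - M) + M * ‖x‖ := by
    intro x
    rw [hh, hMdef]
    field_simp
    ring
  haveI : Nonempty (closedBall (0 : EuclideanSpace ℝ (Fin d)) 1) := ⟨⟨0, h0mem⟩⟩
  set F : EuclideanSpace ℝ (Fin d) → ℝ := fun x => ⨅ y : closedBall (0 : EuclideanSpace ℝ (Fin d)) 1, (f y + M * ‖x - y‖) with hFdef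
  have hbdd : ∀ x : EuclideanSpace ℝ (Fin d), BddBelow (Set.range fun y : closedBall (0 : EuclideanSpace ℝ (Fin d)) 1 =>
      f y + M * ‖x - y‖) := by
    intro x
    refine ⟨f 0 - L, ?_⟩
    rintro _ ⟨⟨y, hy⟩, rfl⟩
    show f 0 - L ≤ f y + M * ‖x - y‖
    have h1 : f 0 ≤ f y + L * ‖(0 : EuclideanSpace ℝ (Fin d)) - y‖ := hflip 0 h0mem y hy
    have h2 : ‖(0 : EuclideanSpace ℝ (Fin d)) - y‖ ≤ 1 := by
      rw [zero_sub, norm_neg]; exact mem_closedBall_zero_iff.1 hy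
    have h3 : 0 ≤ M * ‖x - y‖ := by positivity
    nlinarith [norm_nonneg ((0 : EuclideanSpace ℝ (Fin d)) - y)]
  have hF_le : ∀ (x : EuclideanSpace ℝ (Fin d)) (y : EuclideanSpace ℝ (Fin d)), y ∈ closedBall (0 : EuclideanSpace ℝ (Fin d)) 1 → F x ≤ f y + M * ‖x - y‖ := by
    intro x y hy
    exact ciInf_le (hbdd x) ⟨y, hy⟩
  have hle_F : ∀ (x : EuclideanSpace ℝ (Fin d)) (c : ℝ), (∀ y ∈ closedBall (0 : EuclideanSpace ℝ (Fin d)) 1, c ≤ f y + M * ‖x - y‖) →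
      c ≤ F x := by
    intro x c hc
    exact le_ciInf fun y => hc y y.2
  -- F = f on the unit ball
  have hFeq : ∀ x ∈ closedBall (0 : EuclideanSpace ℝ (Fin d)) 1, F x = f x := by
    intro x hx
    refine le_antisymm ?_ ?_
    · have := hF_le x x hx
      simpa using this
    · refine hle_F x (f x) fun y hy => ?_
      have h1 := hflip x hx y hy
      have h2 : L * ‖x - y‖ ≤ M * ‖x - y‖ :=
        mul_le_mul_of_nonneg_right hLM (norm_nonneg _)
      linarith
  -- F is M-Lipschitz (one-sided, hence two-sided)
  have hFlip1 : ∀ x x' : EuclideanSpace ℝ (Fin d), F x ≤ F x' + M * ‖x - x'‖ := by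
    intro x x'
    have : F x - M * ‖x - x'‖ ≤ F x' := by
      refine hle_F x' _ fun y hy => ?_
      have h1 := hF_le x y hy
      have h2 : ‖x - y‖ ≤ ‖x - x'‖ + ‖x' - y‖ := norm_sub_le_norm_sub_add_norm_sub x x' y
      nlinarith
    linarith
  have hFdist : ∀ x x' : EuclideanSpace ℝ (Fin d), dist (F x) (F x') ≤ M * dist x x' := by
    intro x x'
    rw [Real.dist_eq, dist_eq_norm]
    rcases abs_cases (F x - F x') with ⟨he, _⟩ | ⟨he, _⟩
    · rw [he]; linarith [hFlip1 x x']
    · rw [he]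
      have := hFlip1 x' x
      rw [norm_sub_rev] at this
      linarith
  have hFlipW : LipschitzWith M.toNNReal F := by
    refine LipschitzWith.of_dist_le_mul fun x x' => ?_
    rw [Real.coe_toNNReal M hM0]
    exact hFdist x x'
  -- h is M-Lipschitz
  have hhlipW : LipschitzWith M.toNNReal h := by
    refine LipschitzWith.of_dist_le_mul fun x x' => ?_
    rw [Real.coe_toNNReal M hM0, hh' x, hh' x', Real.dist_eq, dist_eq_norm]
    have h1 : |‖x‖ - ‖x'‖| ≤ ‖x - x'‖ := abs_norm_sub_norm_le x x'
    have h2 : (f 0 + L - M + M * ‖x‖) - (f 0 + L - M + M * ‖x'‖) = M * (‖x‖ - ‖x'‖) := by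
      ring
    rw [h2, abs_mul, abs_of_nonneg hM0]
    exact mul_le_mul_of_nonneg_left h1 hM0
  -- F is convex
  have hFconv : ConvexOn ℝ (Set.univ : Set (EuclideanSpace ℝ (Fin d))) F := by
    refine ⟨convex_univ, fun x _ x' _ a b ha hb hab => ?_⟩
    simp only [smul_eq_mul]
    rcases eq_or_lt_of_le ha with rfl | ha'
    · have : b = 1 := by linarith
      subst this; simp
    rcases eq_or_lt_of_le hb with rfl | hb'
    · have : a = 1 := by linarith
      subst this; simp
    have key : ∀ y ∈ closedBall (0 : EuclideanSpace ℝ (Fin d)) 1, ∀ y' ∈ closedBall (0 : EuclideanSpace ℝ (Fin d)) 1,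
        F (a • x + b • x') ≤ a * (f y + M * ‖x - y‖) + b * (f y' + M * ‖x' - y'‖) := by
      intro y hy y' hy'
      have hmem : a • y + b • y' ∈ closedBall (0 : EuclideanSpace ℝ (Fin d)) 1 :=
        (convex_closedBall (0 : EuclideanSpace ℝ (Fin d)) 1) hy hy' ha hb hab
      have h1 := hF_le (a • x + b • x') (a • y + b • y') hmem
      have h2 : f (a • y + b • y') ≤ a * f y + b * f y' := by
        have := hconv.2 hy hy' ha hb hab
        simpa [smul_eq_mul] using this
      have h3 : ‖(a • x + b • x') - (a • y + b • y')‖ ≤ a * ‖x - y‖ + b * ‖x' - y'‖ := by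
        have he : (a • x + b • x') - (a • y + b • y') = a • (x - y) + b • (x' - y') := by
          module
        rw [he]
        calc ‖a • (x - y) + b • (x' - y')‖ ≤ ‖a • (x - y)‖ + ‖b • (x' - y')‖ :=
              norm_add_le _ _
          _ = a * ‖x - y‖ + b * ‖x' - y'‖ := by
              rw [norm_smul, norm_smul, Real.norm_eq_abs, Real.norm_eq_abs,
                abs_of_nonneg ha, abs_of_nonneg hb]
      have h4 : M * ‖(a • x + b • x') - (a • y + b • y')‖ ≤
          M * (a * ‖x - y‖ + b * ‖x' - y'‖) := mul_le_mul_of_nonneg_left h3 hM0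
      nlinarith
    have ha0 : (0:ℝ) ≤ a := ha
    have haF : a * F x = ⨅ y : closedBall (0 : EuclideanSpace ℝ (Fin d)) 1, a * (f y + M * ‖x - y‖) :=
      Real.mul_iInf_of_nonneg ha0 _
    have hbF : b * F x' = ⨅ y : closedBall (0 : EuclideanSpace ℝ (Fin d)) 1, b * (f y + M * ‖x' - y‖) :=
      Real.mul_iInf_of_nonneg hb _
    rw [haF, hbF]
    exact le_ciInf_add_ciInf fun y y' => key y y.2 y' y'.2
  -- F ≤ h outside the unit ball
  have hF_le_h : ∀ x : EuclideanSpace ℝ (Fin d), 1 ≤ ‖x‖ → F x ≤ h x := by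
    intro x hx
    have hx0 : (0:ℝ) < ‖x‖ := lt_of_lt_of_le one_pos hx
    set u : EuclideanSpace ℝ (Fin d) := ‖x‖⁻¹ • x with hu
    have hun : ‖u‖ = 1 := by
      rw [hu, norm_smul, Real.norm_eq_abs, abs_of_nonneg (inv_nonneg.2 hx0.le),
        inv_mul_cancel₀ hx0.ne']
    have humem : u ∈ closedBall (0 : EuclideanSpace ℝ (Fin d)) 1 := by
      rw [mem_closedBall_zero_iff, hun]
    have hxu : ‖x - u‖ = ‖x‖ - 1 := by
      have he : x - u = (1 - ‖x‖⁻¹) • x := by rw [hu]; module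
      rw [he, norm_smul, Real.norm_eq_abs, abs_of_nonneg]
      · field_simp
      · have : ‖x‖⁻¹ ≤ 1 := by
          rw [inv_le_one_iff₀]; right; exact hx
        linarith
    have h1 := hF_le x u humem
    have h2 : f u ≤ f 0 + L := by
      have := hflip u humem 0 h0mem
      rw [sub_zero, hun] at this
      linarith
    rw [hh' x]
    rw [hxu] at h1
    nlinarith
  -- g = max F h
  have hgeq : g = fun x => max (F x) (h x) := by
    funext x
    rw [hg]
    by_cases hx : ‖x‖ < 1
    · rw [if_pos hx, hFeq x (mem_closedBall_zero_iff.2 hx.le)]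
    · rw [if_neg hx, max_eq_right (hF_le_h x (not_lt.1 hx))]
  refine ⟨?_, ?_, ?_⟩
  · rw [hgeq]
    exact hFconv.sup ⟨convex_univ, fun x _ x' _ a b ha hb hab => by
      simp only [smul_eq_mul, hh']
      have h3 : ‖a • x + b • x'‖ ≤ a * ‖x‖ + b * ‖x'‖ := by
        calc ‖a • x + b • x'‖ ≤ ‖a • x‖ + ‖b • x'‖ := norm_add_le _ _
          _ = a * ‖x‖ + b * ‖x'‖ := by
            rw [norm_smul, norm_smul, Real.norm_eq_abs, Real.norm_eq_abs,
              abs_of_nonneg ha, abs_of_nonneg hb]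
      have h4 : a * (f 0 + L - M + M * ‖x‖) + b * (f 0 + L - M + M * ‖x'‖) =
          (f 0 + L - M) + M * (a * ‖x‖ + b * ‖x'‖) := by
        have hb1 : b = 1 - a := by linarith
        rw [hb1]; ring
      rw [h4]
      linarith [mul_le_mul_of_nonneg_left h3 hM0]⟩
  · rw [hgeq]
    have := hFlipW.max hhlipW
    simpa [max_self] using this
  · intro x hxr
    have hx1 : ‖x‖ < 1 := lt_of_le_of_lt hxr hr1
    rw [hg, if_pos hx1]
    have hmem : x ∈ closedBall (0 : EuclideanSpace ℝ (Fin d)) 1 := mem_closedBall_zero_iff.2 hx1.le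
    have h1 : f 0 ≤ f x + L * ‖x‖ := by
      have := hflip 0 h0mem x hmem
      rw [zero_sub, norm_neg] at this
      linarith
    have h2 : h x ≤ f x := by
      rw [hh' x]
      have hML : M - L = 2 * L * r / (1 - r) := by rw [hMdef]; field_simp; ring
      have hMLa : M + L = 2 * L / (1 - r) := by rw [hMdef]; field_simp; ring
      have h3 : (M + L) * ‖x‖ ≤ (M + L) * r := by
        apply mul_le_mul_of_nonneg_left hxr
        linarith
      rw [hMLa] at h3
      have h4 : 2 * L / (1 - r) * r = 2 * L * r / (1 - r) := by ring
      nlinarith [h1]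
    exact max_eq_left h2
end

section
/- Let $S$ be a subspace of $\mathbb{R}^d$, let $\x \in \mathbb{R}^d$ with $\|\x\|_2 \le 1$, and let $\v, \w \in \mathbb{R}^d$ with $\|\w\|_2 = 1$. Suppose $|\x^\top \v| \le a$, $\|\mathrm{proj}_S(\w)\|_2 \le b$, and $\x^\top(\v - \w) \ge \gamma$. Then $\gamma \le a + b + \sqrt{1 - \|\mathrm{proj}_S(\x)\|_2^2/\|\x\|_2^2}$. -/
/-!
Write `P` for the orthogonal projection onto `S`. Since `P` is self-adjoint,
`⟪x, w⟫ = ⟪x, P w⟫ + ⟪x - P x, w⟫`; Cauchy–Schwarz bounds the first term by `b` and the second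
by `‖x - P x‖`, which Pythagoras identifies with `‖x‖ √(1 - ‖P x‖²/‖x‖²) ≤ √(1 - ‖P x‖²/‖x‖²)`.
-/

open InnerProductSpace

namespace Submodule

variable {E : Type*} [NormedAddCommGroup E] [InnerProductSpace ℝ E]
  (K : Submodule ℝ E) [K.HasOrthogonalProjection]

theorem norm_sub_starProjection_sq (x : E) :
    ‖x - K.starProjection x‖ ^ 2 = ‖x‖ ^ 2 - ‖K.starProjection x‖ ^ 2 := by
  rw [norm_sq_eq_add_norm_sq_starProjection x K, starProjection_orthogonal_val]
  ring

theorem norm_sub_starProjection_le_sqrt {x : E} (hx : ‖x‖ ≤ 1) :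
    ‖x - K.starProjection x‖ ≤ √(1 - ‖K.starProjection x‖ ^ 2 / ‖x‖ ^ 2) := by
  rcases eq_or_ne x 0 with rfl | hx0
  · simp
  have hpos : 0 < ‖x‖ ^ 2 := by positivity
  have hfrac : 0 ≤ 1 - ‖K.starProjection x‖ ^ 2 / ‖x‖ ^ 2 := by
    rw [sub_nonneg, div_le_one hpos]
    nlinarith [norm_sub_starProjection_sq K x, sq_nonneg ‖x - K.starProjection x‖]
  rw [Real.le_sqrt (norm_nonneg _) hfrac, norm_sub_starProjection_sq]
  calc ‖x‖ ^ 2 - ‖K.starProjection x‖ ^ 2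
      = ‖x‖ ^ 2 * (1 - ‖K.starProjection x‖ ^ 2 / ‖x‖ ^ 2) := by field_simp
    _ ≤ 1 - ‖K.starProjection x‖ ^ 2 / ‖x‖ ^ 2 :=
        mul_le_of_le_one_left hfrac (pow_le_one₀ (norm_nonneg x) hx)

theorem abs_inner_le_norm_mul_norm_starProjection_add (x w : E) :
    |⟪x, w⟫_ℝ| ≤ ‖x‖ * ‖K.starProjection w‖ + ‖x - K.starProjection x‖ * ‖w‖ := by
  have hsplit : ⟪x, w⟫_ℝ = ⟪x, K.starProjection w⟫_ℝ + ⟪x - K.starProjection x, w⟫_ℝ := by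
    rw [inner_sub_left, ← inner_starProjection_left_eq_right]
    ring
  rw [hsplit]
  exact (abs_add_le _ _).trans
    (add_le_add (abs_real_inner_le_norm _ _) (abs_real_inner_le_norm _ _))

end Submodule

/-- Projection decomposition bound: if `‖x‖ ≤ 1`, `‖w‖ = 1`, `|xᵀv| ≤ a`,
`‖proj_S w‖ ≤ b` and `xᵀ(v − w) ≥ γ`, then
`γ ≤ a + b + √(1 − ‖proj_S x‖²/‖x‖²)`. -/
theorem stmt_14 (d : ℕ) (S : Submodule ℝ (EuclideanSpace ℝ (Fin d)))
    (x v w : EuclideanSpace ℝ (Fin d)) (a b γ : ℝ)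
    (hx : ‖x‖ ≤ 1) (hw : ‖w‖ = 1)
    (hxv : |(⟪x, v⟫_ℝ)| ≤ a)
    (hSw : ‖(S.orthogonalProjectionOnto w : EuclideanSpace ℝ (Fin d))‖ ≤ b)
    (hγ : γ ≤ ⟪x, v - w⟫_ℝ) :
    γ ≤ a + b + Real.sqrt (1 -
      ‖(S.orthogonalProjectionOnto x : EuclideanSpace ℝ (Fin d))‖ ^ 2 / ‖x‖ ^ 2) := by
  have hxw := S.abs_inner_le_norm_mul_norm_starProjection_add x w
  have hperp := S.norm_sub_starProjection_le_sqrt hx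
  have hproj : ‖x‖ * ‖S.starProjection w‖ ≤ b :=
    (mul_le_of_le_one_left (norm_nonneg _) hx).trans hSw
  rw [hw, mul_one] at hxw
  rw [inner_sub_right] at hγ
  change _ ≤ a + b + √(1 - ‖S.starProjection x‖ ^ 2 / ‖x‖ ^ 2)
  linarith [le_abs_self ⟪x, v⟫_ℝ, neg_abs_le ⟪x, w⟫_ℝ]
end
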